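/- For all natural numbers n and m, R_{n+m}(x,y;u|q) = sum_{k=0}^m [m choose k]_q u^{binom(k,2)} x^{m-k} y^k R_n(x, q^{m-k} u^k y; u|q). -/

import Mathlib

/-!
Let `T f y = x f(qy) + y f(uy)`. The q-Pascal rule `[m+1, k] = q^k [m, k] + [m, k-1]` gives, by
induction on `m` and for every function `f`,
`T^m f y = ∑_k [m, k] u^C(k,2) x^(m-k) y^k f(q^(m-k) u^k y)`.
For `f = 1` this says `R_n(x, ·; u|q) = T^n 1`, so `R_{n+m} = T^m (T^n 1) = T^m R_n(x, ·; u|q)`,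
which is the identity.
-/

/-- The q-shifted factorial `(a;q)_n = ∏_{j=0}^{n-1} (1 - a q^j)`. -/
noncomputable def qPoch (a q : ℂ) (n : ℕ) : ℂ := ∏ j ∈ Finset.range n, (1 - a * q ^ j)

/-- The Gaussian binomial coefficient `[n choose k]_q = (q;q)_n / ((q;q)_k (q;q)_{n-k})`. -/
noncomputable def qBinom (q : ℂ) (n k : ℕ) : ℂ := qPoch q q n / (qPoch q q k * qPoch q q (n - k))

/-- The u-deformed homogeneous polynomial
`R_n(x,y;u|q) = ∑_{k=0}^n [n choose k]_q u^{C(k,2)} x^{n-k} y^k`. -/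
noncomputable def Rpoly (q : ℂ) (n : ℕ) (x y u : ℂ) : ℂ :=
  ∑ k ∈ Finset.range (n + 1), qBinom q n k * u ^ (k.choose 2) * x ^ (n - k) * y ^ k

open Finset

section

variable {R : Type*} [CommSemiring R]

/-- Gaussian binomial coefficients from the q-Pascal rule; unlike `qBinom`, they vanish
for `k > n`. -/
def qPascal (q : R) : ℕ → ℕ → R
  | _, 0 => 1
  | 0, _ + 1 => 0
  | n + 1, k + 1 => q ^ (k + 1) * qPascal q n (k + 1) + qPascal q n k

@[simp]
theorem qPascal_zero_right (q : R) (n : ℕ) : qPascal q n 0 = 1 := by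
  cases n <;> rfl

theorem qPascal_succ_succ (q : R) (n k : ℕ) :
    qPascal q (n + 1) (k + 1) = q ^ (k + 1) * qPascal q n (k + 1) + qPascal q n k :=
  rfl

theorem qPascal_eq_zero_of_lt (q : R) {n k : ℕ} (h : n < k) : qPascal q n k = 0 := by
  induction n generalizing k with
  | zero => obtain ⟨k, rfl⟩ := Nat.exists_eq_add_one_of_ne_zero h.ne'; rfl
  | succ n ih =>
    obtain ⟨k, rfl⟩ := Nat.exists_eq_add_one_of_ne_zero (Nat.ne_zero_of_lt h)
    rw [qPascal_succ_succ, ih (by omega), ih (by omega), mul_zero, add_zero]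

theorem sum_range_qPascal_succ_mul (q : R) (m : ℕ) (a : ℕ → R) :
    ∑ k ∈ range (m + 2), qPascal q (m + 1) k * a k =
      ∑ k ∈ range (m + 1), qPascal q m k * (q ^ k * a k + a (k + 1)) := by
  set b : ℕ → R := fun k ↦ q ^ k * qPascal q m k * a k
  have hshift : ∑ k ∈ range (m + 1), b (k + 1) + b 0 = ∑ k ∈ range (m + 1), b k := by
    have hlast : b (m + 1) = 0 := by simp [b, qPascal_eq_zero_of_lt q m.lt_succ_self]
    rw [← sum_range_succ', sum_range_succ, hlast, add_zero]
  calc ∑ k ∈ range (m + 2), qPascal q (m + 1) k * a k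
      = (∑ k ∈ range (m + 1), b (k + 1) + b 0) +
          ∑ k ∈ range (m + 1), qPascal q m k * a (k + 1) := by
        simp only [sum_range_succ' _ (m + 1), qPascal_succ_succ, qPascal_zero_right, add_mul,
          sum_add_distrib, pow_zero, one_mul, b]
        ring
    _ = ∑ k ∈ range (m + 1), qPascal q m k * (q ^ k * a k + a (k + 1)) := by
        rw [hshift, ← sum_add_distrib]
        exact sum_congr rfl fun k _ ↦ by ring

def qShift (q u x : R) (f : R → R) (y : R) : R :=
  x * f (q * y) + y * f (u * y)

theorem iterate_qShift_apply (q u x : R) (f : R → R) (m : ℕ) (y : R) :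
    (qShift q u x)^[m] f y =
      ∑ k ∈ range (m + 1),
        qPascal q m k * u ^ k.choose 2 * x ^ (m - k) * y ^ k * f (q ^ (m - k) * u ^ k * y) := by
  induction m generalizing y with
  | zero => simp
  | succ m ih =>
    rw [Function.iterate_succ_apply', qShift, ih, ih, mul_sum, mul_sum, ← sum_add_distrib]
    simp only [mul_assoc (qPascal q _ _)]
    rw [sum_range_qPascal_succ_mul q m]
    refine sum_congr rfl fun k hk ↦ ?_
    obtain ⟨d, rfl⟩ := Nat.exists_eq_add_of_le (Nat.lt_succ_iff.mp (mem_range.mp hk))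
    rw [show k + d + 1 - k = d + 1 by omega, show k + d + 1 - (k + 1) = d by omega,
      Nat.add_sub_cancel_left, Nat.choose_succ_succ', Nat.choose_one_right,
      show q ^ (d + 1) * u ^ k * y = q ^ d * u ^ k * (q * y) by ring,
      show q ^ d * u ^ (k + 1) * y = q ^ d * u ^ k * (u * y) by ring]
    ring

end

theorem qPoch_succ (a q : ℂ) (n : ℕ) : qPoch a q (n + 1) = qPoch a q n * (1 - a * q ^ n) :=
  prod_range_succ _ _

theorem qPoch_self_ne_zero {q : ℂ} (hq : ∀ m : ℕ, 0 < m → q ^ m ≠ 1) (n : ℕ) :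
    qPoch q q n ≠ 0 :=
  prod_ne_zero_iff.mpr fun j _ ↦ by
    rw [← pow_succ', sub_ne_zero]
    exact (hq (j + 1) j.succ_pos).symm

theorem qPascal_mul_qPoch (q : ℂ) {n k : ℕ} (h : k ≤ n) :
    qPascal q n k * qPoch q q k * qPoch q q (n - k) = qPoch q q n := by
  induction n generalizing k with
  | zero => simp [Nat.le_zero.mp h, qPoch]
  | succ n ih =>
    cases k with
    | zero => simp [qPoch]
    | succ k =>
      rw [qPascal_succ_succ, Nat.succ_sub_succ, qPoch_succ q q n, qPoch_succ q q k]
      rcases (Nat.le_of_succ_le_succ h).lt_or_eq with hk | rfl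
      · obtain ⟨d, rfl⟩ := Nat.exists_eq_add_of_lt hk
        have h₁ := ih (k := k + 1) (by omega)
        have h₀ := ih (k := k) (by omega)
        rw [show k + d + 1 - (k + 1) = d by omega, qPoch_succ q q k] at h₁
        rw [show k + d + 1 - k = d + 1 by omega, qPoch_succ] at h₀ ⊢
        linear_combination (q ^ (k + 1) * (1 - q * q ^ d)) * h₁ + (1 - q * q ^ k) * h₀
      · have hk := ih (le_refl k)
        rw [qPascal_eq_zero_of_lt q k.lt_succ_self]
        linear_combination (1 - q * q ^ k) * hk

theorem qBinom_eq_qPascal {q : ℂ} (hq : ∀ m : ℕ, 0 < m → q ^ m ≠ 1) {n k : ℕ} (h : k ≤ n) :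
    qBinom q n k = qPascal q n k := by
  rw [qBinom, div_eq_iff (mul_ne_zero (qPoch_self_ne_zero hq k) (qPoch_self_ne_zero hq _)),
    ← mul_assoc, qPascal_mul_qPoch q h]

theorem Rpoly_eq_iterate_qShift {q : ℂ} (hq : ∀ m : ℕ, 0 < m → q ^ m ≠ 1) (n : ℕ) (x y u : ℂ) :
    Rpoly q n x y u = (qShift q u x)^[n] (fun _ ↦ 1) y := by
  rw [iterate_qShift_apply, Rpoly]
  exact sum_congr rfl fun k hk ↦ by
    rw [qBinom_eq_qPascal hq (Nat.lt_succ_iff.mp (mem_range.mp hk)), mul_one]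

theorem Rpoly_add_index (q : ℂ) (hq : ∀ m : ℕ, 0 < m → q ^ m ≠ 1) (u x y : ℂ) (n m : ℕ) :
    Rpoly q (n + m) x y u =
      ∑ k ∈ Finset.range (m + 1),
        qBinom q m k * u ^ (k.choose 2) * x ^ (m - k) * y ^ k *
          Rpoly q n x (q ^ (m - k) * u ^ k * y) u := by
  rw [Rpoly_eq_iterate_qShift hq, add_comm, Function.iterate_add_apply, iterate_qShift_apply]
  refine sum_congr rfl fun k hk ↦ ?_
  rw [qBinom_eq_qPascal hq (Nat.lt_succ_iff.mp (mem_range.mp hk)), Rpoly_eq_iterate_qShift hq]
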